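/- arXiv:2006.14458 — 7 statements merged into one kernel-verified Lean document; each statement's English description precedes it below -/
import Mathlib

section
/- For every integer d ≥ 1 and every sign pattern σ of length d+1, there exists a monic hyperbolic polynomial P of degree d with all coefficients nonzero such that P realizes σ, the moduli of the d roots of P are pairwise distinct, and the moduli of the roots of P are in the canonical order. -/
open Polynomial

/-- A sign pattern of length `d+1`, encoded as a function `ℕ → ℝ`:
its relevant values are at positions `0, …, d` (position `k` carries the sign of the
coefficient of `x^(d-k)`), each equal to `1` or `-1`, and the leading sign is `+1`. -/
def IsSignPattern (d : ℕ) (sp : ℕ → ℝ) : Prop :=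
  sp 0 = 1 ∧ ∀ k ≤ d, sp k = 1 ∨ sp k = -1

/-- `P` is a monic hyperbolic polynomial of degree `d` (it splits into real linear
factors `∏ (X - γ j)`), all of whose coefficients are nonzero, whose roots
`γ 0, …, γ (d-1)` are listed so that their moduli are strictly increasing
(in particular the moduli of the roots are pairwise distinct). -/
def HypOrdered (d : ℕ) (P : Polynomial ℝ) (γ : Fin d → ℝ) : Prop :=
  P = ∏ j : Fin d, (X - C (γ j)) ∧
  (∀ j ≤ d, P.coeff j ≠ 0) ∧
  StrictMono (fun j : Fin d => |γ j|)

/-- The monic degree-`d` polynomial `P` realizes the sign pattern `sp`: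
for `k = 0, …, d` the sign of the coefficient of `x^(d-k)` is `sp k`. -/
def Realizes (d : ℕ) (P : Polynomial ℝ) (sp : ℕ → ℝ) : Prop :=
  ∀ k ≤ d, 0 < sp k * P.coeff (d - k)

/-- The moduli of the roots `γ 0 < … < γ (d-1)` (listed by increasing modulus) of `P`
are in the canonical order: the root of `(i+1)`-th smallest modulus is negative exactly
when `a_(i+1) · a_i > 0`. -/
def CanonicalOrder (d : ℕ) (P : Polynomial ℝ) (γ : Fin d → ℝ) : Prop :=
  ∀ i : Fin d, (γ i < 0 ↔ 0 < P.coeff ((i : ℕ) + 1) * P.coeff (i : ℕ))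

/-- A sign pattern is canonical if every monic hyperbolic polynomial with all
coefficients nonzero and pairwise distinct moduli of roots realizing it has its
moduli of roots in the canonical order. -/
def IsCanonical (d : ℕ) (sp : ℕ → ℝ) : Prop :=
  ∀ (P : Polynomial ℝ) (γ : Fin d → ℝ),
    HypOrdered d P γ → Realizes d P sp → CanonicalOrder d P γ

/-- `sp` is the sign pattern `Σ_{m 0, …, m (s-1)}` of length `d+1`: it consists of
`m 0` signs `+1`, followed by `m 1` signs `-1`, followed by `m 2` signs `+1`, and so on. -/
def IsSigmaOf (d s : ℕ) (m : ℕ → ℕ) (sp : ℕ → ℝ) : Prop :=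
  (∀ i < s, 1 ≤ m i) ∧ (∑ i ∈ Finset.range s, m i = d + 1) ∧
  ∀ i k : ℕ, i < s → (∑ j ∈ Finset.range i, m j) ≤ k →
    k < (∑ j ∈ Finset.range (i + 1), m j) → sp k = (-1) ^ i

/-!
Induct on the degree, each time adding a root of smaller modulus than all previous ones. If
`|r|` is small, the coefficient of `x^(j+1)` in `(x - r) p` is `p_j - r p_(j+1)`, with the sign
of `p_j`; so the new pattern is the old one followed by the sign of the constant term `-r p_0`,
which the sign of `r` makes arbitrary. Consecutive coefficients of the old polynomial keep
their product signs, hence the old roots stay in canonical order, and the new root `r` of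
smallest modulus is negative exactly when `-r p_0` has the sign of `p_0`.
-/

open Filter Topology

lemma pos_mul_trans {a b c : ℝ} (hab : 0 < a * b) (hbc : 0 < b * c) : 0 < a * c := by
  have hb : 0 < b * b := mul_self_pos.2 (right_ne_zero_of_mul hab.ne')
  have : 0 < a * c * (b * b) := by nlinarith
  exact pos_of_mul_pos_left this hb.le

lemma exists_mul_pos_of_eventually_nhds_zero {c : ℝ} (hc : c ≠ 0) {Q : ℝ → Prop}
    (hQ : ∀ᶠ r in 𝓝 0, Q r) : ∃ r, 0 < c * r ∧ Q r := by
  have hlim : Tendsto (fun t => c⁻¹ * t) (𝓝[>] 0) (𝓝 0) := by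
    simpa using ((continuous_const_mul c⁻¹).tendsto 0).mono_left nhdsWithin_le_nhds
  obtain ⟨t, ht, hQt⟩ := (eventually_mem_nhdsWithin.and (hlim.eventually hQ)).exists
  exact ⟨c⁻¹ * t, by rwa [mul_inv_cancel_left₀ hc], hQt⟩

lemma coeff_X_sub_C_mul_succ_mul_pos {p : ℝ[X]} {r : ℝ} {j : ℕ}
    (h : |r * p.coeff (j + 1)| < |p.coeff j|) :
    0 < p.coeff j * ((X - C r) * p).coeff (j + 1) := by
  rw [coeff_X_sub_C_mul]
  have := neg_abs_le (r * p.coeff (j + 1))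
  have := le_abs_self (r * p.coeff (j + 1))
  rcases abs_cases (p.coeff j) with ⟨hj, _⟩ | ⟨hj, _⟩ <;> nlinarith

lemma HypOrdered.root_ne_zero {d : ℕ} {p : ℝ[X]} {γ : Fin d → ℝ} (hp : HypOrdered d p γ)
    (i : Fin d) : γ i ≠ 0 := by
  intro hγ
  apply hp.2.1 0 (Nat.zero_le d)
  rw [coeff_zero_eq_eval_zero, hp.1, eval_prod]
  exact Finset.prod_eq_zero (Finset.mem_univ i) (by simp [hγ])

lemma HypOrdered.eventually_abs_lt {d : ℕ} {p : ℝ[X]} {γ : Fin d → ℝ}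
    (hp : HypOrdered d p γ) :
    ∀ᶠ r in 𝓝 0, (∀ i, |r| < |γ i|) ∧ ∀ j ≤ d, |r * p.coeff (j + 1)| < |p.coeff j| := by
  refine (eventually_all.2 fun i => ?_).and ((Set.finite_le_nat d).eventually_all.2 fun j hj => ?_)
  · exact (continuous_abs.tendsto' 0 0 abs_zero).eventually_lt_const (abs_pos.2 (hp.root_ne_zero i))
  · exact (((continuous_mul_const _).abs).tendsto' 0 0 (by simp)).eventually_lt_const
      (abs_pos.2 (hp.2.1 j hj))

section AddSmallRoot

variable {d : ℕ} {p : ℝ[X]} {r : ℝ}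

lemma HypOrdered.X_sub_C_mul {γ : Fin d → ℝ} (hp : HypOrdered d p γ) (hr : r ≠ 0)
    (hrγ : ∀ i, |r| < |γ i|) (hsame : ∀ j ≤ d, 0 < p.coeff j * ((X - C r) * p).coeff (j + 1)) :
    HypOrdered (d + 1) ((X - C r) * p) (Fin.cons r γ) := by
  refine ⟨by rw [Fin.prod_univ_succ, hp.1]; simp, fun j hj => ?_, ?_⟩
  · cases j with
    | zero => simpa [mul_coeff_zero] using ⟨hr, hp.2.1 0 (Nat.zero_le d)⟩
    | succ j => exact right_ne_zero_of_mul (hsame j (by omega)).ne'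
  · change StrictMono (abs ∘ Fin.cons r γ)
    rw [Fin.comp_cons, Fin.strictMono_cons]
    exact ⟨hrγ, hp.2.2⟩

lemma Realizes.X_sub_C_mul {sp : ℕ → ℝ} (hp : Realizes d p sp)
    (hsame : ∀ j ≤ d, 0 < p.coeff j * ((X - C r) * p).coeff (j + 1))
    (hlast : 0 < sp (d + 1) * ((X - C r) * p).coeff 0) :
    Realizes (d + 1) ((X - C r) * p) sp := by
  intro k hk
  rcases hk.lt_or_eq with hk | rfl
  · rw [show d + 1 - k = d - k + 1 by omega]
    exact pos_mul_trans (hp k (by omega)) (hsame (d - k) (by omega))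
  · simpa using hlast

lemma CanonicalOrder.X_sub_C_mul {γ : Fin d → ℝ} (hp : CanonicalOrder d p γ)
    (hsame : ∀ j ≤ d, 0 < p.coeff j * ((X - C r) * p).coeff (j + 1)) :
    CanonicalOrder (d + 1) ((X - C r) * p) (Fin.cons r γ) := by
  intro i
  induction i using Fin.cases with
  | zero =>
    have h0 : ((X - C r) * p).coeff 0 = -r * p.coeff 0 := by simp [mul_coeff_zero]
    have h1 : ((X - C r) * p).coeff 1 * (-r * p.coeff 0) =
        -r * (p.coeff 0 * ((X - C r) * p).coeff 1) := by ring
    rw [Fin.cons_zero, Fin.val_zero, zero_add, h0, h1,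
      mul_pos_iff_of_pos_right (hsame 0 (Nat.zero_le d)), neg_pos]
  | succ i =>
    rw [Fin.cons_succ, hp i, Fin.val_succ]
    refine pos_iff_pos_of_mul_pos ?_
    rw [mul_mul_mul_comm]
    exact mul_pos (hsame (i + 1) i.isLt) (hsame i (by omega))

end AddSmallRoot

lemma IsSignPattern.of_succ {d : ℕ} {sp : ℕ → ℝ} (h : IsSignPattern (d + 1) sp) :
    IsSignPattern d sp :=
  ⟨h.1, fun k hk => h.2 k (by omega)⟩

theorem every_sign_pattern_realizable_canonically_general
    (d : ℕ) (sp : ℕ → ℝ) (hsp : IsSignPattern d sp) :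
    ∃ (P : Polynomial ℝ) (γ : Fin d → ℝ),
      HypOrdered d P γ ∧ Realizes d P sp ∧ CanonicalOrder d P γ := by
  induction d with
  | zero =>
    refine ⟨1, Fin.elim0, ⟨by simp, fun j hj => by simp [Nat.le_zero.1 hj], fun i => i.elim0⟩,
      fun k hk => by simp [Nat.le_zero.1 hk, hsp.1], fun i => i.elim0⟩
  | succ d ih =>
    obtain ⟨p, γ, hp, hreal, hcan⟩ := ih hsp.of_succ
    have hc : -(sp (d + 1) * p.coeff 0) ≠ 0 := by
      rcases hsp.2 (d + 1) le_rfl with h | h <;> simp [h, hp.2.1 0 (Nat.zero_le d)]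
    obtain ⟨r, hsign, hrγ, hsmall⟩ := exists_mul_pos_of_eventually_nhds_zero hc hp.eventually_abs_lt
    have hsame j (hj : j ≤ d) := coeff_X_sub_C_mul_succ_mul_pos (hsmall j hj)
    have hlast : 0 < sp (d + 1) * ((X - C r) * p).coeff 0 := by
      simpa [mul_coeff_zero, mul_comm, mul_left_comm, mul_assoc] using hsign
    exact ⟨_, _, hp.X_sub_C_mul (right_ne_zero_of_mul hsign.ne') hrγ hsame,
      hreal.X_sub_C_mul hsame hlast, hcan.X_sub_C_mul hsame⟩

/-- every sign pattern of length `d+1`, `d ≥ 1`, is realizable by a monic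
degree-`d` hyperbolic polynomial with nonzero coefficients, pairwise distinct moduli of
roots, and canonical order of the moduli of the roots. -/
theorem every_sign_pattern_realizable_canonically
    (d : ℕ) (hd : 1 ≤ d) (sp : ℕ → ℝ) (hsp : IsSignPattern d sp) :
    ∃ (P : Polynomial ℝ) (γ : Fin d → ℝ),
      HypOrdered d P γ ∧ Realizes d P sp ∧ CanonicalOrder d P γ :=
  every_sign_pattern_realizable_canonically_general d sp hsp
end

section
/- Every canonical sign pattern is of type 2. Equivalently: if a sign pattern σ = Σ_{m_1,...,m_s} of length d+1 either has two consecutive components m_i > 1, m_{i+1} > 1, or has a component m_i = 2 with 2 ≤ i ≤ s−1, then σ is not canonical, i.e., there exist two monic hyperbolic polynomials of degree d with all coefficients nonzero and pairwise distinct moduli of roots, both realizing σ, whose moduli of roots define two different orders (in particular at least one of them is not the canonical order). -/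
open Polynomial

/-!
Scaling the roots of a monic hyperbolic polynomial `P` by a small `t > 0` and multiplying by
another one `Q` concatenates their sign patterns: as `t → 0` the coefficient of `X ^ j` in
`P.scaleRoots t * Q` has the sign of its term of lowest order in `t`, that is of `P_j Q_0` for
`j ≤ deg P` and of `Q_(j - deg P)` above, while the scaled roots of `P` become those of smallest
moduli. Concatenating linear factors and one cubic thus realizes any sign pattern, with the roots
of the cubic consecutive in the order of the moduli. Two consecutive components larger than `1`
give a window `++--`, an interior component `2` a window `+--+`, and each window is realized by two
cubics whose middle roots have opposite signs: `(x+2)(x-3)(x+4)` and `(x+2)(x+3)(x-4)`,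
resp. `(x-2)(x+3)(x-4)` and `(x+3)(x-4)(x-5)`.
-/

open Filter Topology Finset

noncomputable def prodXSubC (l : List ℝ) : ℝ[X] := (l.map fun r => X - C r).prod

@[simp]
lemma prodXSubC_nil : prodXSubC [] = 1 := rfl

@[simp]
lemma prodXSubC_cons (r : ℝ) (l : List ℝ) : prodXSubC (r :: l) = (X - C r) * prodXSubC l := by
  simp [prodXSubC]

lemma prodXSubC_append (l₁ l₂ : List ℝ) :
    prodXSubC (l₁ ++ l₂) = prodXSubC l₁ * prodXSubC l₂ := by
  simp [prodXSubC]

lemma monic_prodXSubC (l : List ℝ) : (prodXSubC l).Monic := by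
  induction l with
  | nil => exact monic_one
  | cons r l ih => exact (monic_X_sub_C r).mul ih

lemma natDegree_prodXSubC (l : List ℝ) : (prodXSubC l).natDegree = l.length := by
  induction l with
  | nil => simp
  | cons r l ih =>
    rw [prodXSubC_cons, natDegree_mul (X_sub_C_ne_zero r) (monic_prodXSubC l).ne_zero, ih,
      natDegree_X_sub_C, List.length_cons, add_comm]

lemma prodXSubC_map_mul (l : List ℝ) (t : ℝ) :
    prodXSubC (l.map (· * t)) = (prodXSubC l).scaleRoots t := by
  induction l with
  | nil => simp
  | cons r l ih => simp [ih, mul_scaleRoots_of_noZeroDivisors]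

theorem tendsto_coeff_scaleRoots_mul_div (P Q : ℝ[X]) (j : ℕ) :
    Tendsto (fun t => (P.scaleRoots t * Q).coeff j / t ^ (P.natDegree - j)) (𝓝[≠] 0)
      (𝓝 (P.coeff (min j P.natDegree) * Q.coeff (j - min j P.natDegree))) := by
  set p := P.natDegree
  set g : ℝ → ℝ := fun t =>
    ∑ x ∈ antidiagonal j, P.coeff x.1 * Q.coeff x.2 * t ^ (p - x.1 - (p - j))
  have hg : ∀ t ≠ 0, (P.scaleRoots t * Q).coeff j / t ^ (p - j) = g t := by
    intro t ht
    rw [div_eq_iff (pow_ne_zero _ ht), coeff_mul, Finset.sum_mul]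
    refine Finset.sum_congr rfl fun x hx => ?_
    have hx : x.1 ≤ j := by rw [HasAntidiagonal.mem_antidiagonal] at hx; omega
    rw [coeff_scaleRoots, mul_assoc, mul_assoc, ← pow_add, Nat.sub_add_cancel (by omega)]
    ring
  -- at `t = 0` only the term with the lowest power of `t` survives
  have hg0 : g 0 = P.coeff (min j p) * Q.coeff (j - min j p) := by
    simp only [g, zero_pow_eq]
    rw [Finset.sum_eq_single (min j p, j - min j p)]
    · rw [if_pos (by omega), mul_one]
    · intro x hx hne
      rw [HasAntidiagonal.mem_antidiagonal] at hx
      split_ifs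
      · have : p < x.1 := by
          by_contra
          exact hne (Prod.ext (by simp; omega) (by simp; omega))
        rw [coeff_eq_zero_of_natDegree_lt this]; ring
      · ring
    · intro h; exact absurd (HasAntidiagonal.mem_antidiagonal.mpr (by omega)) h
  rw [← hg0]
  refine Tendsto.congr' (eventually_nhdsWithin_of_forall fun t ht => (hg t ht).symm) ?_
  exact tendsto_nhdsWithin_of_tendsto_nhds (by fun_prop : Continuous g).continuousAt.tendsto

lemma eventually_pos_mul_coeff_scaleRoots_mul {P Q : ℝ[X]} {j : ℕ} {e : ℝ}
    (h : 0 < e * (P.coeff (min j P.natDegree) * Q.coeff (j - min j P.natDegree))) :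
    ∀ᶠ t in 𝓝[>] 0, 0 < e * (P.scaleRoots t * Q).coeff j := by
  have hlim := (((tendsto_coeff_scaleRoots_mul_div P Q j).mono_left
    (nhdsGT_le_nhdsNE 0)).const_mul e).eventually_const_lt h
  filter_upwards [hlim, eventually_mem_nhdsWithin] with t ht (ht0 : 0 < t)
  rw [mul_div_assoc'] at ht
  exact (div_pos_iff_of_pos_right (pow_pos ht0 _)).mp ht

lemma eventually_forall_abs_mul_lt (l₁ l₂ : List ℝ) (h : ∀ b ∈ l₂, b ≠ 0) :
    ∀ᶠ t in 𝓝 0, ∀ a ∈ l₁, ∀ b ∈ l₂, |a * t| < |b| := by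
  refine (eventually_all_finite l₁.finite_toSet).mpr fun a _ =>
    (eventually_all_finite l₂.finite_toSet).mpr fun b hb => ?_
  have : Tendsto (fun t => |a * t|) (𝓝 0) (𝓝 0) := by
    simpa using (continuous_const.mul continuous_id).abs.tendsto (f := fun t : ℝ => |a * t|) 0
  exact this.eventually_lt_const (abs_pos.mpr (h b hb))

/-- The coefficient of `X ^ j` has sign `ε j` relative to the leading coefficient, whose sign
is taken to be `ε l.length`. -/
def RealizesSigns (ε : ℕ → ℝ) (l : List ℝ) : Prop :=
  l.Pairwise (fun a b => |a| < |b|) ∧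
    ∀ j ≤ l.length, 0 < ε j * ε l.length * (prodXSubC l).coeff j

lemma realizesSigns_nil {ε : ℕ → ℝ} (h : ε 0 ≠ 0) : RealizesSigns ε [] := by
  refine ⟨List.Pairwise.nil, fun j hj => ?_⟩
  obtain rfl : j = 0 := by simpa using hj
  simpa using mul_self_pos.mpr h

lemma realizesSigns_singleton {δ : ℕ → ℝ} (h₀ : δ 0 ≠ 0) (h₁ : δ 1 ≠ 0) :
    RealizesSigns δ [-(δ 0 * δ 1)] := by
  refine ⟨List.pairwise_singleton _ _, fun j hj => ?_⟩
  rw [List.length_singleton] at hj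
  interval_cases j
  · simpa using mul_self_pos.mpr (mul_ne_zero h₀ h₁)
  · simpa using mul_self_pos.mpr h₁

namespace RealizesSigns

variable {ε : ℕ → ℝ}

lemma ne_zero_of_mem {l : List ℝ} (h : RealizesSigns ε l) {r : ℝ} (hr : r ∈ l) : r ≠ 0 := by
  rintro rfl
  have hroot : (prodXSubC l).IsRoot 0 :=
    dvd_iff_isRoot.mp (List.dvd_prod (List.mem_map_of_mem hr))
  simpa [coeff_zero_eq_eval_zero, hroot.eq_zero] using h.2 0 (Nat.zero_le _)

theorem exists_map_mul_append {l₁ l₂ : List ℝ} (h₁ : RealizesSigns ε l₁)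
    (h₂ : RealizesSigns (fun j => ε (l₁.length + j)) l₂) :
    ∃ t > 0, RealizesSigns ε (l₁.map (· * t) ++ l₂) := by
  set P := prodXSubC l₁
  set Q := prodXSubC l₂
  set p := l₁.length
  set q := l₂.length
  have hp : P.natDegree = p := natDegree_prodXSubC l₁
  have h₁c : ∀ j ≤ p, 0 < ε j * ε p * P.coeff j := h₁.2
  have h₂c : ∀ j ≤ q, 0 < ε (p + j) * ε (p + q) * Q.coeff j := h₂.2
  have hlim : ∀ j ≤ p + q, 0 < ε j * ε (p + q) *
      (P.coeff (min j P.natDegree) * Q.coeff (j - min j P.natDegree)) := by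
    intro j hj
    rw [hp]
    rcases le_total j p with hjp | hpj
    · rw [min_eq_left hjp, Nat.sub_self]
      refine pos_of_mul_pos_right (a := ε p * ε p) ?_ (mul_self_nonneg _)
      convert mul_pos (h₁c j hjp) (h₂c 0 (Nat.zero_le _)) using 1
      rw [Nat.add_zero]
      ring
    · have hP : P.coeff p = 1 := hp ▸ (monic_prodXSubC l₁).coeff_natDegree
      rw [min_eq_right hpj, hP, one_mul]
      simpa [Nat.add_sub_cancel' hpj] using h₂c (j - p) (by omega)
  have hev : ∀ᶠ t in 𝓝[>] 0, 0 < t ∧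
      (∀ j ≤ p + q, 0 < ε j * ε (p + q) * (P.scaleRoots t * Q).coeff j) ∧
      ∀ a ∈ l₁, ∀ b ∈ l₂, |a * t| < |b| :=
    eventually_mem_nhdsWithin.and <|
      ((eventually_all_finite (Set.finite_le_nat _)).mpr fun j hj =>
        eventually_pos_mul_coeff_scaleRoots_mul (hlim j hj)).and <|
      (eventually_forall_abs_mul_lt l₁ l₂ fun _ => h₂.ne_zero_of_mem).filter_mono
        nhdsWithin_le_nhds
  obtain ⟨t, ht, hcoeff, hlt⟩ := hev.exists
  refine ⟨t, ht, List.pairwise_append.mpr ⟨List.pairwise_map.mpr (h₁.1.imp fun hab => ?_), h₂.1,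
    by simpa using hlt⟩, ?_⟩
  · rw [abs_mul, abs_mul, abs_of_pos ht]
    exact mul_lt_mul_of_pos_right hab ht
  · rw [List.length_append, List.length_map, prodXSubC_append, prodXSubC_map_mul]
    exact hcoeff

theorem exists_map_mul_append_of_length (hε : ∀ j, ε j ≠ 0) {l : List ℝ}
    (h : RealizesSigns ε l) (k : ℕ) :
    ∃ t > 0, ∃ l' : List ℝ, l'.length = k ∧ RealizesSigns ε (l.map (· * t) ++ l') := by
  induction k with
  | zero => exact ⟨1, one_pos, [], rfl, by simpa using h⟩
  | succ k ih =>
    obtain ⟨t, ht, l', hl', h'⟩ := ih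
    set n := (l.map (· * t) ++ l').length
    obtain ⟨t', ht', h''⟩ := h'.exists_map_mul_append
      (realizesSigns_singleton (δ := fun j => ε (n + j)) (hε _) (hε _))
    refine ⟨t * t', mul_pos ht ht', l'.map (· * t') ++ [-(ε n * ε (n + 1))], by simp [hl'], ?_⟩
    simpa [List.map_map, Function.comp_def, mul_assoc] using h''

end RealizesSigns

theorem exists_realizesSigns_of_block {ε : ℕ → ℝ} (hε : ∀ j, ε j ≠ 0) {c : ℕ} {m : List ℝ}
    (h : RealizesSigns (fun j => ε (c + j)) m) (k : ℕ) :
    ∃ t > 0, ∃ l₁ l₃ : List ℝ, l₁.length = c ∧ l₃.length = k ∧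
      RealizesSigns ε (l₁ ++ m.map (· * t) ++ l₃) := by
  obtain ⟨_, _, l₁, rfl, h₁⟩ := (realizesSigns_nil (hε 0)).exists_map_mul_append_of_length hε c
  rw [List.map_nil, List.nil_append] at h₁
  obtain ⟨t, _, h₂⟩ := h₁.exists_map_mul_append h
  obtain ⟨t', ht', l₃, rfl, h₃⟩ := h₂.exists_map_mul_append_of_length hε k
  refine ⟨t', ht', (l₁.map (· * t)).map (· * t'), l₃, by simp, rfl, ?_⟩
  simpa using h₃

lemma realizesSigns_triple {f : ℕ → ℝ} {u v w : ℝ} (huv : |u| < |v|) (hvw : |v| < |w|)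
    (h₀ : 0 < f 0 * f 3 * -(u * v * w)) (h₁ : 0 < f 1 * f 3 * (u * v + u * w + v * w))
    (h₂ : 0 < f 2 * f 3 * -(u + v + w)) (h₃ : f 3 ≠ 0) : RealizesSigns f [u, v, w] := by
  have hP : prodXSubC [u, v, w] =
      X ^ 3 - C (u + v + w) * X ^ 2 + C (u * v + u * w + v * w) * X - C (u * v * w) := by
    simp only [prodXSubC_cons, prodXSubC_nil, map_add, map_mul]
    ring
  refine ⟨by simp [huv, huv.trans hvw, hvw], fun j hj => ?_⟩
  simp only [List.length_cons, List.length_nil] at hj ⊢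
  rw [hP]
  interval_cases j <;>
    simp only [coeff_sub, coeff_add, coeff_C_mul, coeff_X_pow, coeff_X, coeff_C] <;> norm_num
  exacts [by linarith, h₁, by linarith, h₃]

lemma realizesSigns_sigma22 {f : ℕ → ℝ} (h₀ : f 0 ≠ 0) (h₁ : f 1 = f 0) (h₂ : f 2 = -f 0)
    (h₃ : f 3 = -f 0) : RealizesSigns f [-2, 3, -4] ∧ RealizesSigns f [-2, -3, 4] := by
  have := mul_self_pos.mpr h₀
  constructor <;> apply realizesSigns_triple <;> (try simp only [h₁, h₂, h₃]) <;> norm_num <;>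
    nlinarith

lemma realizesSigns_sigma121 {f : ℕ → ℝ} (h₀ : f 0 ≠ 0) (h₁ : f 1 = -f 0) (h₂ : f 2 = -f 0)
    (h₃ : f 3 = f 0) : RealizesSigns f [2, -3, 4] ∧ RealizesSigns f [-3, 4, 5] := by
  have := mul_self_pos.mpr h₀
  constructor <;> apply realizesSigns_triple <;> (try simp only [h₁, h₂, h₃]) <;> norm_num <;>
    nlinarith

theorem exists_realizesSigns_of_window {ε : ℕ → ℝ} (hε : ∀ j, ε j ≠ 0) {n c : ℕ} {m : List ℝ}
    (hc : c + m.length ≤ n) (h : RealizesSigns (fun j => ε (c + j)) m) {i : ℕ}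
    (hi : i < m.length) :
    ∃ (l : List ℝ) (hl : l.length = n), RealizesSigns ε l ∧ (l[c + i] < 0 ↔ m[i] < 0) := by
  obtain ⟨t, ht, l₁, l₃, hl₁, hl₃, hl⟩ := exists_realizesSigns_of_block hε h (n - (c + m.length))
  refine ⟨l₁ ++ m.map (· * t) ++ l₃, by simp; omega, hl, ?_⟩
  rw [List.getElem_append_left (by simp; omega), List.getElem_append_right (by omega)]
  simp [hl₁, mul_neg_iff, ht, ht.not_gt]

lemma IsSignPattern.ne_zero {d : ℕ} {sp : ℕ → ℝ} (hsp : IsSignPattern d sp) {k : ℕ}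
    (hk : k ≤ d) : sp k ≠ 0 := by
  rcases hsp.2 k hk with h | h <;> rw [h] <;> norm_num

theorem RealizesSigns.hypOrdered_realizes {d : ℕ} {sp : ℕ → ℝ} (hsp : IsSignPattern d sp)
    {l : List ℝ} (hl : l.length = d) (h : RealizesSigns (fun j => sp (d - j)) l) :
    HypOrdered d (prodXSubC l) (fun i => l[i.1]) ∧ Realizes d (prodXSubC l) sp := by
  subst hl
  have hc : ∀ j ≤ l.length, 0 < sp (l.length - j) * (prodXSubC l).coeff j := by
    simpa [hsp.1] using h.2
  refine ⟨⟨(Fin.prod_univ_fun_getElem l _).symm, fun j hj h0 => (hc j hj).ne' ?_,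
    fun i j hij => ?_⟩, fun k hk => ?_⟩
  · rw [h0, mul_zero]
  · exact List.pairwise_iff_getElem.mp h.1 i j i.2 j.2 hij
  · simpa [Nat.sub_sub_self hk] using hc (l.length - k) (Nat.sub_le _ _)

theorem exists_orders_ne_of_window {d : ℕ} {sp : ℕ → ℝ} (hsp : IsSignPattern d sp) {c : ℕ}
    {m₁ m₂ : List ℝ} (h₁ : RealizesSigns (fun j => sp (d - (c + j))) m₁)
    (h₂ : RealizesSigns (fun j => sp (d - (c + j))) m₂) (hlen : m₁.length = m₂.length)
    (hc : c + m₁.length ≤ d) {i : ℕ} (hi : i < m₁.length)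
    (hne : ¬(m₁[i] < 0 ↔ m₂[i] < 0)) :
    ∃ (P₁ P₂ : Polynomial ℝ) (γ₁ γ₂ : Fin d → ℝ),
      HypOrdered d P₁ γ₁ ∧ Realizes d P₁ sp ∧
      HypOrdered d P₂ γ₂ ∧ Realizes d P₂ sp ∧
      ∃ i : Fin d, ¬ (γ₁ i < 0 ↔ γ₂ i < 0) := by
  have hε : ∀ j, sp (d - j) ≠ 0 := fun j => hsp.ne_zero (Nat.sub_le d j)
  obtain ⟨l₁, hl₁, hr₁, hs₁⟩ := exists_realizesSigns_of_window hε hc h₁ hi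
  obtain ⟨l₂, hl₂, hr₂, hs₂⟩ := exists_realizesSigns_of_window hε (hlen ▸ hc) h₂ (hlen ▸ hi)
  obtain ⟨hP₁, hR₁⟩ := hr₁.hypOrdered_realizes hsp hl₁
  obtain ⟨hP₂, hR₂⟩ := hr₂.hypOrdered_realizes hsp hl₂
  exact ⟨_, _, _, _, hP₁, hR₁, hP₂, hR₂, ⟨c + i, by omega⟩, by simpa [hs₁, hs₂] using hne⟩

namespace IsSigmaOf

variable {d s : ℕ} {m : ℕ → ℕ} {sp : ℕ → ℝ}

lemma pos (hσ : IsSigmaOf d s m sp) : 0 < s :=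
  Nat.pos_of_ne_zero fun h => by simpa [h] using hσ.2.1

lemma sum_range_le (hσ : IsSigmaOf d s m sp) {a : ℕ} (ha : a ≤ s) :
    ∑ j ∈ range a, m j ≤ d + 1 :=
  hσ.2.1 ▸ Finset.sum_le_sum_of_subset (range_subset_range.mpr ha)

lemma exists_block (hσ : IsSigmaOf d s m sp) {k : ℕ} (hk : k ≤ d) :
    ∃ i < s, ∑ j ∈ range i, m j ≤ k ∧ k < ∑ j ∈ range (i + 1), m j := by
  classical
  have hs := hσ.pos
  have hlast : k < ∑ j ∈ range (s - 1 + 1), m j := by rw [Nat.sub_add_cancel hs, hσ.2.1]; omega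
  have hex : ∃ i, k < ∑ j ∈ range (i + 1), m j := ⟨s - 1, hlast⟩
  refine ⟨Nat.find hex, ?_, ?_, Nat.find_spec hex⟩
  · have := Nat.find_min' hex hlast
    omega
  · rcases h : Nat.find hex with _ | n
    · simp
    · exact not_lt.mp (Nat.find_min hex (h ▸ n.lt_succ_self))

lemma isSignPattern (hσ : IsSigmaOf d s m sp) : IsSignPattern d sp := by
  have hm₀ : 0 < ∑ j ∈ range (0 + 1), m j := by rw [sum_range_one]; exact hσ.1 0 hσ.pos
  refine ⟨by simpa using hσ.2.2 0 0 hσ.pos le_rfl hm₀, fun k hk => ?_⟩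
  obtain ⟨i, hi, hlo, hhi⟩ := hσ.exists_block hk
  rw [hσ.2.2 i k hi hlo hhi]
  exact neg_one_pow_eq_or ℝ i

lemma exists_window_sigma22 (hσ : IsSigmaOf d s m sp) {i : ℕ} (hi : i + 1 < s)
    (h₁ : 1 < m i) (h₂ : 1 < m (i + 1)) :
    ∃ c, c + 3 ≤ d ∧ sp (d - (c + 1)) = sp (d - c) ∧ sp (d - (c + 2)) = -sp (d - c) ∧
      sp (d - (c + 3)) = -sp (d - c) := by
  have hB₁ : ∑ j ∈ range (i + 1), m j = ∑ j ∈ range i, m j + m i := sum_range_succ m i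
  have hB₂ : ∑ j ∈ range (i + 1 + 1), m j = ∑ j ∈ range (i + 1), m j + m (i + 1) :=
    sum_range_succ m (i + 1)
  have hB := hσ.sum_range_le (a := i + 1 + 1) hi
  have hcur : ∀ k, ∑ j ∈ range i, m j ≤ k → k < ∑ j ∈ range (i + 1), m j → sp k = (-1) ^ i :=
    fun k hlo hhi => hσ.2.2 i k (by omega) hlo hhi
  have hnext : ∀ k, ∑ j ∈ range (i + 1), m j ≤ k → k < ∑ j ∈ range (i + 1 + 1), m j →
      sp k = -(-1) ^ i := fun k hlo hhi => by
    rw [hσ.2.2 (i + 1) k hi hlo hhi, pow_succ, mul_neg_one]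
  set b := ∑ j ∈ range (i + 1), m j
  refine ⟨d - (b + 1), by omega, ?_⟩
  rw [show d - (d - (b + 1)) = b + 1 by omega, show d - (d - (b + 1) + 1) = b by omega,
    show d - (d - (b + 1) + 2) = b - 1 by omega, show d - (d - (b + 1) + 3) = b - 2 by omega,
    hnext b le_rfl (by omega), hnext (b + 1) (by omega) (by omega),
    hcur (b - 1) (by omega) (by omega), hcur (b - 2) (by omega) (by omega), neg_neg]
  exact ⟨rfl, rfl, rfl⟩

lemma exists_window_sigma121 (hσ : IsSigmaOf d s m sp) {i : ℕ} (hi₀ : 1 ≤ i) (hi : i + 1 < s)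
    (h₂ : m i = 2) :
    ∃ c, c + 3 ≤ d ∧ sp (d - (c + 1)) = -sp (d - c) ∧ sp (d - (c + 2)) = -sp (d - c) ∧
      sp (d - (c + 3)) = sp (d - c) := by
  obtain ⟨i, rfl⟩ : ∃ i', i = i' + 1 := ⟨i - 1, by omega⟩
  have hB₁ : ∑ j ∈ range (i + 1), m j = ∑ j ∈ range i, m j + m i := sum_range_succ m i
  have hB₂ : ∑ j ∈ range (i + 1 + 1), m j = ∑ j ∈ range (i + 1), m j + m (i + 1) :=
    sum_range_succ m (i + 1)
  have hB₃ : ∑ j ∈ range (i + 1 + 1 + 1), m j = ∑ j ∈ range (i + 1 + 1), m j + m (i + 1 + 1) :=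
    sum_range_succ m (i + 1 + 1)
  have hB := hσ.sum_range_le (a := i + 1 + 1 + 1) hi
  have hm := hσ.1 i (by omega)
  have hm' := hσ.1 (i + 1 + 1) hi
  have hprev := hσ.2.2 i (∑ j ∈ range (i + 1), m j - 1) (by omega) (by omega) (by omega)
  have hcur : ∀ k, ∑ j ∈ range (i + 1), m j ≤ k → k < ∑ j ∈ range (i + 1 + 1), m j →
      sp k = -(-1) ^ i := fun k hlo hhi => by
    rw [hσ.2.2 (i + 1) k (by omega) hlo hhi, pow_succ, mul_neg_one]
  have hnext : ∀ k, ∑ j ∈ range (i + 1 + 1), m j ≤ k → k < ∑ j ∈ range (i + 1 + 1 + 1), m j →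
      sp k = (-1) ^ i := fun k hlo hhi => by
    rw [hσ.2.2 (i + 1 + 1) k hi hlo hhi, pow_succ, pow_succ, mul_assoc]; norm_num
  set b := ∑ j ∈ range (i + 1), m j
  refine ⟨d - (b + 2), by omega, ?_⟩
  rw [show d - (d - (b + 2)) = b + 2 by omega, show d - (d - (b + 2) + 1) = b + 1 by omega,
    show d - (d - (b + 2) + 2) = b by omega, show d - (d - (b + 2) + 3) = b - 1 by omega,
    hnext (b + 2) (by omega) (by omega), hcur (b + 1) (by omega) (by omega),
    hcur b le_rfl (by omega), hprev]
  exact ⟨rfl, rfl, rfl⟩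

end IsSigmaOf

/-- a canonical sign pattern is of type 2.  Equivalently, if the sign
pattern `Σ_{m 0, …, m (s-1)}` has two consecutive components larger than `1`, or an
interior component equal to `2`, then it is not canonical: it is realized by two monic
hyperbolic polynomials with nonzero coefficients and pairwise distinct moduli of roots
whose moduli of roots define two different orders. -/
theorem canonical_is_type2 (d s : ℕ) (m : ℕ → ℕ) (sp : ℕ → ℝ)
    (hσ : IsSigmaOf d s m sp)
    (h : (∃ i, i + 1 < s ∧ 1 < m i ∧ 1 < m (i + 1)) ∨
         (∃ i, 1 ≤ i ∧ i + 1 < s ∧ m i = 2)) :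
    ∃ (P₁ P₂ : Polynomial ℝ) (γ₁ γ₂ : Fin d → ℝ),
      HypOrdered d P₁ γ₁ ∧ Realizes d P₁ sp ∧
      HypOrdered d P₂ γ₂ ∧ Realizes d P₂ sp ∧
      ∃ i : Fin d, ¬ (γ₁ i < 0 ↔ γ₂ i < 0) := by
  have hsp := hσ.isSignPattern
  rcases h with ⟨i, hi, h₁, h₂⟩ | ⟨i, hi₀, hi, h₂⟩
  · obtain ⟨c, hc, e₁, e₂, e₃⟩ := hσ.exists_window_sigma22 hi h₁ h₂
    obtain ⟨hm₁, hm₂⟩ := realizesSigns_sigma22 (f := fun j => sp (d - (c + j)))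
      (hsp.ne_zero (Nat.sub_le _ _)) e₁ e₂ e₃
    exact exists_orders_ne_of_window hsp hm₁ hm₂ rfl hc (i := 1) (by simp) (by norm_num)
  · obtain ⟨c, hc, e₁, e₂, e₃⟩ := hσ.exists_window_sigma121 hi₀ hi h₂
    obtain ⟨hm₁, hm₂⟩ := realizesSigns_sigma121 (f := fun j => sp (d - (c + j)))
      (hsp.ne_zero (Nat.sub_le _ _)) e₁ e₂ e₃
    exact exists_orders_ne_of_window hsp hm₁ hm₂ rfl hc (i := 1) (by simp) (by norm_num)
end

section
/- Let r ≥ 2 and ℓ be integers with r²−2 < ℓ < (r+1)²−2 and ℓ−r odd, and let c_j denote the coefficient of x^j in the polynomial (x−1)²(x+1)^ℓ. Then all coefficients c_0, ..., c_{ℓ+2} are nonzero; moreover c_j > 0 for j ≤ (ℓ−r+1)/2 and for j ≥ (ℓ+r+3)/2, and c_j < 0 for (ℓ−r+1)/2 < j < (ℓ+r+3)/2. In particular the sequence of coefficients, read from the leading one, consists of (ℓ−r+3)/2 positive entries, then r negative entries, then (ℓ−r+3)/2 positive entries. -/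
/-!
Since `(x - 1)² = (x + 1)² - 4x`, the coefficient of `x^j` in `(x - 1)²(x + 1)^ℓ` is
`C(n, j) - 4 C(ℓ, j - 1)` with `n = ℓ + 2`, and `n (n - 1) C(ℓ, j - 1) = j (n - j) C(n, j)`; hence
`n (n - 1) c_j = C(n, j) ((n - 2j)² - n)`. So `c_j` has the sign of `(n - 2j)² - n`. As
`r² < n < (r + 1)²`, it is positive when `|n - 2j| ≥ r + 1` and negative when `|n - 2j| ≤ r`;
since `n - 2j ≡ r + 1 (mod 2)`, these two cases are exactly the stated ranges of `j`.
-/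

open Polynomial

theorem Nat.add_two_mul_add_one_mul_choose (ℓ i : ℕ) :
    (ℓ + 2) * (ℓ + 1) * ℓ.choose i = (ℓ + 2).choose (i + 1) * ((i + 1) * (ℓ + 1 - i)) := by
  have h₁ := Nat.add_one_mul_choose_eq ℓ i
  have h₂ := Nat.choose_mul_succ_eq (ℓ + 1) (i + 1)
  rw [show ℓ + 1 + 1 - (i + 1) = ℓ + 1 - i by omega] at h₂
  calc (ℓ + 2) * (ℓ + 1) * ℓ.choose i = (ℓ + 1).choose (i + 1) * (ℓ + 2) * (i + 1) := by
        rw [mul_assoc, h₁]; ring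
    _ = _ := by rw [h₂]; ring

theorem coeff_sub_one_sq_mul_add_one_pow (ℓ j : ℕ) (hj : j ≤ ℓ + 2) :
    ((ℓ : ℤ) + 2) * ((ℓ : ℤ) + 1) * ((X - 1) ^ 2 * (X + 1) ^ ℓ : ℤ[X]).coeff j =
      (ℓ + 2).choose j * (((ℓ : ℤ) + 2 - 2 * j) ^ 2 - ((ℓ : ℤ) + 2)) := by
  have hP : ((X - 1) ^ 2 * (X + 1) ^ ℓ : ℤ[X]) = (X + 1) ^ (ℓ + 2) - 4 * (X * (X + 1) ^ ℓ) := by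
    ring
  rw [hP, coeff_sub, coeff_ofNat_mul, coeff_X_add_one_pow]
  cases j with
  | zero => rw [coeff_X_mul_zero]; push_cast; ring
  | succ i =>
    have h := congrArg (Nat.cast (R := ℤ)) (Nat.add_two_mul_add_one_mul_choose ℓ i)
    push_cast [Nat.cast_sub (show i ≤ ℓ + 1 by omega)] at h
    rw [coeff_X_mul, coeff_X_add_one_pow]
    push_cast
    linear_combination (-4) * h

section Signs

variable {ℓ j : ℕ}

theorem coeff_sub_one_sq_mul_add_one_pow_pos_iff (hj : j ≤ ℓ + 2) :
    0 < ((X - 1) ^ 2 * (X + 1) ^ ℓ : ℤ[X]).coeff j ↔ (ℓ : ℤ) + 2 < ((ℓ : ℤ) + 2 - 2 * j) ^ 2 := by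
  have hn : (0 : ℤ) < ((ℓ : ℤ) + 2) * ((ℓ : ℤ) + 1) := by positivity
  have hc : (0 : ℤ) < (ℓ + 2).choose j := by exact_mod_cast Nat.choose_pos hj
  rw [← mul_pos_iff_of_pos_left hn, coeff_sub_one_sq_mul_add_one_pow ℓ j hj,
    mul_pos_iff_of_pos_left hc, sub_pos]

theorem coeff_sub_one_sq_mul_add_one_pow_neg_iff (hj : j ≤ ℓ + 2) :
    ((X - 1) ^ 2 * (X + 1) ^ ℓ : ℤ[X]).coeff j < 0 ↔ ((ℓ : ℤ) + 2 - 2 * j) ^ 2 < (ℓ : ℤ) + 2 := by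
  have hn : (0 : ℤ) < ((ℓ : ℤ) + 2) * ((ℓ : ℤ) + 1) := by positivity
  have hc : (0 : ℤ) < (ℓ + 2).choose j := by exact_mod_cast Nat.choose_pos hj
  rw [← mul_lt_mul_iff_right₀ hn, mul_zero, coeff_sub_one_sq_mul_add_one_pow ℓ j hj,
    ← mul_zero ((ℓ + 2).choose j : ℤ), mul_lt_mul_iff_right₀ hc, sub_neg]

theorem coeff_sub_one_sq_mul_add_one_pow_pos_of_le_abs {m : ℕ} (hj : j ≤ ℓ + 2)
    (hm : ℓ + 2 < m ^ 2) (hd : (m : ℤ) ≤ |(ℓ : ℤ) + 2 - 2 * j|) :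
    0 < ((X - 1) ^ 2 * (X + 1) ^ ℓ : ℤ[X]).coeff j := by
  rw [coeff_sub_one_sq_mul_add_one_pow_pos_iff hj, ← sq_abs]
  calc (ℓ : ℤ) + 2 < (m : ℤ) ^ 2 := by exact_mod_cast hm
    _ ≤ _ := pow_le_pow_left₀ m.cast_nonneg hd 2

theorem coeff_sub_one_sq_mul_add_one_pow_neg_of_abs_le {m : ℕ} (hj : j ≤ ℓ + 2)
    (hm : m ^ 2 < ℓ + 2) (hd : |(ℓ : ℤ) + 2 - 2 * j| ≤ m) :
    ((X - 1) ^ 2 * (X + 1) ^ ℓ : ℤ[X]).coeff j < 0 := by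
  rw [coeff_sub_one_sq_mul_add_one_pow_neg_iff hj, ← sq_abs]
  calc |(ℓ : ℤ) + 2 - 2 * j| ^ 2 ≤ (m : ℤ) ^ 2 := pow_le_pow_left₀ (abs_nonneg _) hd 2
    _ < _ := by exact_mod_cast hm

end Signs

theorem coeff_signs_odd_case_general (r ℓ : ℕ)
    (hℓ₁ : r ^ 2 - 2 < ℓ) (hℓ₂ : ℓ < (r + 1) ^ 2 - 2) (hodd : Odd (ℓ - r)) :
    (∀ j ≤ ℓ + 2, ((X - 1) ^ 2 * (X + 1) ^ ℓ : Polynomial ℤ).coeff j ≠ 0) ∧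
    (∀ j, j ≤ (ℓ - r + 1) / 2 →
      0 < ((X - 1) ^ 2 * (X + 1) ^ ℓ : Polynomial ℤ).coeff j) ∧
    (∀ j, (ℓ + r + 3) / 2 ≤ j → j ≤ ℓ + 2 →
      0 < ((X - 1) ^ 2 * (X + 1) ^ ℓ : Polynomial ℤ).coeff j) ∧
    (∀ j, (ℓ - r + 1) / 2 < j → j < (ℓ + r + 3) / 2 →
      ((X - 1) ^ 2 * (X + 1) ^ ℓ : Polynomial ℤ).coeff j < 0) := by
  obtain ⟨k, hk⟩ := hodd
  have low : ∀ j, j ≤ (ℓ - r + 1) / 2 → 0 < ((X - 1) ^ 2 * (X + 1) ^ ℓ : ℤ[X]).coeff j :=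
    fun j hj => coeff_sub_one_sq_mul_add_one_pow_pos_of_le_abs (m := r + 1) (by omega) (by omega)
      (le_abs.mpr (.inl (by push_cast; omega)))
  have high : ∀ j, (ℓ + r + 3) / 2 ≤ j → j ≤ ℓ + 2 →
      0 < ((X - 1) ^ 2 * (X + 1) ^ ℓ : ℤ[X]).coeff j :=
    fun j hj hjn => coeff_sub_one_sq_mul_add_one_pow_pos_of_le_abs (m := r + 1) hjn (by omega)
      (le_abs.mpr (.inr (by push_cast; omega)))
  have middle : ∀ j, (ℓ - r + 1) / 2 < j → j < (ℓ + r + 3) / 2 →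
      ((X - 1) ^ 2 * (X + 1) ^ ℓ : ℤ[X]).coeff j < 0 :=
    fun j hj₁ hj₂ => coeff_sub_one_sq_mul_add_one_pow_neg_of_abs_le (m := r) (by omega) (by omega)
      (abs_le.mpr ⟨by omega, by omega⟩)
  refine ⟨fun j hj => ?_, low, high, middle⟩
  rcases (by omega : j ≤ (ℓ - r + 1) / 2 ∨ (ℓ - r + 1) / 2 < j ∧ j < (ℓ + r + 3) / 2 ∨
      (ℓ + r + 3) / 2 ≤ j) with h | ⟨h₁, h₂⟩ | h
  · exact (low j h).ne'
  · exact (middle j h₁ h₂).ne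
  · exact (high j h hj).ne'

/-- part (1) of Lemma 1: for `r ≥ 2`, `r² - 2 < ℓ < (r+1)² - 2` and
`ℓ - r` odd, all coefficients of `(x-1)²(x+1)^ℓ` are nonzero; the coefficient of `x^j`
is positive for `j ≤ (ℓ-r+1)/2` and for `j ≥ (ℓ+r+3)/2`, and negative in between.
In particular, read from the leading coefficient, the signs form `(ℓ-r+3)/2` positive
entries, then `r` negative entries, then `(ℓ-r+3)/2` positive entries. -/
theorem coeff_signs_odd_case (r ℓ : ℕ) (hr : 2 ≤ r)
    (hℓ₁ : r ^ 2 - 2 < ℓ) (hℓ₂ : ℓ < (r + 1) ^ 2 - 2) (hodd : Odd (ℓ - r)) :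
    (∀ j ≤ ℓ + 2, ((X - 1) ^ 2 * (X + 1) ^ ℓ : Polynomial ℤ).coeff j ≠ 0) ∧
    (∀ j, j ≤ (ℓ - r + 1) / 2 →
      0 < ((X - 1) ^ 2 * (X + 1) ^ ℓ : Polynomial ℤ).coeff j) ∧
    (∀ j, (ℓ + r + 3) / 2 ≤ j → j ≤ ℓ + 2 →
      0 < ((X - 1) ^ 2 * (X + 1) ^ ℓ : Polynomial ℤ).coeff j) ∧
    (∀ j, (ℓ - r + 1) / 2 < j → j < (ℓ + r + 3) / 2 →
      ((X - 1) ^ 2 * (X + 1) ^ ℓ : Polynomial ℤ).coeff j < 0) :=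
  coeff_signs_odd_case_general r ℓ hℓ₁ hℓ₂ hodd
end

section
/- Let r ≥ 2 and ℓ be integers with r²−2 < ℓ < (r+1)²−2 and ℓ−r even, and let c_j denote the coefficient of x^j in the polynomial (x−1)²(x+1)^ℓ. Then all coefficients c_0, ..., c_{ℓ+2} are nonzero; moreover c_j > 0 for j ≤ (ℓ−r)/2 and for j ≥ (ℓ+r+4)/2, and c_j < 0 for (ℓ−r)/2 < j < (ℓ+r+4)/2. In particular the sequence of coefficients, read from the leading one, consists of (ℓ−r+2)/2 positive entries, then r+1 negative entries, then (ℓ−r+2)/2 positive entries. -/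
/-!
Write `c_j` for the coefficient of `x^j` in `(x - 1)²(x + 1)^ℓ = (x + 1)^(ℓ+2) - 4x(x + 1)^ℓ`,
so `c_{k+1} = C(ℓ+2, k+1) - 4 C(ℓ, k)`. Comparing both binomials with `C(ℓ, k)` gives
`(k + 1)(ℓ + 1 - k) c_{k+1} = ((ℓ - 2k)² - (ℓ + 2)) C(ℓ, k)`, so for `k ≤ ℓ` the sign of
`c_{k+1}` is that of `(ℓ - 2k)² - (ℓ + 2)`. Since `r² < ℓ + 2 < (r + 1)²`, this is negative
exactly when `|ℓ - 2k| ≤ r` and positive otherwise; the parity of `ℓ - r` places the sign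
changes at the indices of the statement.
-/

open Polynomial

theorem coeff_sub_one_sq_mul_add_one_pow_zero {R : Type*} [CommRing R] (ℓ : ℕ) :
    ((X - 1) ^ 2 * (X + 1) ^ ℓ : R[X]).coeff 0 = 1 := by
  simp [coeff_zero_eq_eval_zero]

theorem coeff_sub_one_sq_mul_add_one_pow_succ {R : Type*} [CommRing R] (ℓ k : ℕ) :
    ((X - 1) ^ 2 * (X + 1) ^ ℓ : R[X]).coeff (k + 1) =
      (ℓ + 2).choose (k + 1) - 4 * ℓ.choose k := by
  have h : ((X - 1) ^ 2 * (X + 1) ^ ℓ : R[X]) = (X + 1) ^ (ℓ + 2) - 4 * (X * (X + 1) ^ ℓ) := by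
    ring
  rw [h, coeff_sub, coeff_ofNat_mul, coeff_X_mul, coeff_X_add_one_pow, coeff_X_add_one_pow]

theorem coeff_sub_one_sq_mul_add_one_pow_self {R : Type*} [CommRing R] (ℓ : ℕ) :
    ((X - 1) ^ 2 * (X + 1) ^ ℓ : R[X]).coeff (ℓ + 2) = 1 := by
  rw [coeff_sub_one_sq_mul_add_one_pow_succ, Nat.choose_self, Nat.choose_succ_self]
  simp

theorem mul_choose_add_two_succ (ℓ k : ℕ) (hk : k ≤ ℓ) :
    ((k + 1) * (ℓ + 1 - k) : ℤ) * (ℓ + 2).choose (k + 1) = (ℓ + 2) * (ℓ + 1) * ℓ.choose k := by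
  have h₁ : ((ℓ + 2 : ℕ) : ℤ) * (ℓ + 1).choose k = (ℓ + 2).choose (k + 1) * (k + 1) := by
    exact_mod_cast Nat.add_one_mul_choose_eq (ℓ + 1) k
  have h₂ : (ℓ.choose k : ℤ) * (ℓ + 1) = (ℓ + 1).choose k * ((ℓ + 1 - k : ℕ) : ℤ) := by
    exact_mod_cast Nat.choose_mul_succ_eq ℓ k
  rw [Nat.cast_sub (by omega)] at h₂
  push_cast at h₁ h₂ ⊢
  linear_combination ((k : ℤ) - ℓ - 1) * h₁ - (ℓ + 2) * h₂

theorem mul_coeff_sub_one_sq_mul_add_one_pow_succ (ℓ k : ℕ) (hk : k ≤ ℓ) :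
    ((k + 1) * (ℓ + 1 - k) : ℤ) * ((X - 1) ^ 2 * (X + 1) ^ ℓ : ℤ[X]).coeff (k + 1) =
      (((ℓ : ℤ) - 2 * k) ^ 2 - (ℓ + 2)) * ℓ.choose k := by
  rw [coeff_sub_one_sq_mul_add_one_pow_succ]
  linear_combination mul_choose_add_two_succ ℓ k hk

theorem sign_coeff_sub_one_sq_mul_add_one_pow_succ (ℓ k : ℕ) (hk : k ≤ ℓ) :
    SignType.sign (((X - 1) ^ 2 * (X + 1) ^ ℓ : ℤ[X]).coeff (k + 1)) =
      SignType.sign (((ℓ : ℤ) - 2 * k) ^ 2 - (ℓ + 2)) := by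
  have hfactor : (0 : ℤ) < (k + 1) * (ℓ + 1 - k) := by nlinarith
  have hchoose : (0 : ℤ) < ℓ.choose k := by exact_mod_cast Nat.choose_pos hk
  have h := congrArg SignType.sign (mul_coeff_sub_one_sq_mul_add_one_pow_succ ℓ k hk)
  rwa [sign_mul, sign_pos hfactor, one_mul, sign_mul, sign_pos hchoose, mul_one] at h

theorem coeff_sub_one_sq_mul_add_one_pow_succ_pos {ℓ k r : ℕ} (hk : k ≤ ℓ)
    (hr : ℓ + 2 < (r + 1) ^ 2) (h : (r : ℤ) < |(ℓ : ℤ) - 2 * k|) :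
    0 < ((X - 1) ^ 2 * (X + 1) ^ ℓ : ℤ[X]).coeff (k + 1) := by
  have hr' : (ℓ + 2 : ℤ) < (r + 1) ^ 2 := by exact_mod_cast hr
  have hsq : ((r : ℤ) + 1) ^ 2 ≤ ((ℓ : ℤ) - 2 * k) ^ 2 := by
    rw [sq_le_sq, abs_of_nonneg (by positivity)]
    omega
  rw [← sign_eq_one_iff, sign_coeff_sub_one_sq_mul_add_one_pow_succ ℓ k hk, sign_eq_one_iff]
  linarith

theorem coeff_sub_one_sq_mul_add_one_pow_succ_neg {ℓ k r : ℕ} (hk : k ≤ ℓ)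
    (hr : r ^ 2 < ℓ + 2) (h : |(ℓ : ℤ) - 2 * k| ≤ r) :
    ((X - 1) ^ 2 * (X + 1) ^ ℓ : ℤ[X]).coeff (k + 1) < 0 := by
  have hr' : ((r : ℤ)) ^ 2 < ℓ + 2 := by exact_mod_cast hr
  have hsq : ((ℓ : ℤ) - 2 * k) ^ 2 ≤ (r : ℤ) ^ 2 := by
    rwa [sq_le_sq, abs_of_nonneg (by positivity : (0 : ℤ) ≤ r)]
  rw [← sign_eq_neg_one_iff, sign_coeff_sub_one_sq_mul_add_one_pow_succ ℓ k hk,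
    sign_eq_neg_one_iff]
  linarith

theorem coeff_signs_even_case_general (r ℓ : ℕ)
    (hℓ₁ : r ^ 2 - 2 < ℓ) (hℓ₂ : ℓ < (r + 1) ^ 2 - 2) (heven : Even (ℓ - r)) :
    (∀ j ≤ ℓ + 2, ((X - 1) ^ 2 * (X + 1) ^ ℓ : Polynomial ℤ).coeff j ≠ 0) ∧
    (∀ j, j ≤ (ℓ - r) / 2 →
      0 < ((X - 1) ^ 2 * (X + 1) ^ ℓ : Polynomial ℤ).coeff j) ∧
    (∀ j, (ℓ + r + 4) / 2 ≤ j → j ≤ ℓ + 2 →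
      0 < ((X - 1) ^ 2 * (X + 1) ^ ℓ : Polynomial ℤ).coeff j) ∧
    (∀ j, (ℓ - r) / 2 < j → j < (ℓ + r + 4) / 2 →
      ((X - 1) ^ 2 * (X + 1) ^ ℓ : Polynomial ℤ).coeff j < 0) := by
  have hlow : r ^ 2 < ℓ + 2 := by omega
  have hhigh : ℓ + 2 < (r + 1) ^ 2 := by omega
  have hrℓ : r ≤ ℓ := by nlinarith
  obtain ⟨m, hm⟩ := heven
  have hℓ : ℓ = r + 2 * m := by omega
  have hpos_low : ∀ j ≤ m, 0 < ((X - 1) ^ 2 * (X + 1) ^ ℓ : ℤ[X]).coeff j := by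
    rintro (_ | k) hk
    · rw [coeff_sub_one_sq_mul_add_one_pow_zero]; exact one_pos
    · exact coeff_sub_one_sq_mul_add_one_pow_succ_pos (by omega) hhigh
        (lt_abs.2 (Or.inl (by omega)))
  have hpos_high : ∀ j, r + m + 2 ≤ j → j ≤ ℓ + 2 →
      0 < ((X - 1) ^ 2 * (X + 1) ^ ℓ : ℤ[X]).coeff j := by
    intro j hj₁ hj₂
    obtain rfl | hj₂ := hj₂.eq_or_lt
    · rw [coeff_sub_one_sq_mul_add_one_pow_self]; exact one_pos
    obtain ⟨k, rfl⟩ : ∃ k, j = k + 1 := ⟨j - 1, by omega⟩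
    exact coeff_sub_one_sq_mul_add_one_pow_succ_pos (by omega) hhigh
      (lt_abs.2 (Or.inr (by omega)))
  have hneg : ∀ j, m < j → j < r + m + 2 → ((X - 1) ^ 2 * (X + 1) ^ ℓ : ℤ[X]).coeff j < 0 := by
    rintro (_ | k) hj₁ hj₂
    · omega
    · exact coeff_sub_one_sq_mul_add_one_pow_succ_neg (by omega) hlow
        (abs_le.2 ⟨by omega, by omega⟩)
  refine ⟨fun j hj => ?_, fun j hj => hpos_low j (by omega),
    fun j hj₁ hj₂ => hpos_high j (by omega) hj₂, fun j hj₁ hj₂ => hneg j (by omega) (by omega)⟩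
  rcases Nat.lt_or_ge m j with hj₁ | hj₁
  · rcases Nat.lt_or_ge j (r + m + 2) with hj₂ | hj₂
    · exact (hneg j hj₁ hj₂).ne
    · exact (hpos_high j hj₂ hj).ne'
  · exact (hpos_low j hj₁).ne'

/-- part (2) of Lemma 1: for `r ≥ 2`, `r² - 2 < ℓ < (r+1)² - 2` and
`ℓ - r` even, all coefficients of `(x-1)²(x+1)^ℓ` are nonzero; the coefficient of `x^j`
is positive for `j ≤ (ℓ-r)/2` and for `j ≥ (ℓ+r+4)/2`, and negative in between.
In particular, read from the leading coefficient, the signs form `(ℓ-r+2)/2` positive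
entries, then `r+1` negative entries, then `(ℓ-r+2)/2` positive entries. -/
theorem coeff_signs_even_case (r ℓ : ℕ) (hr : 2 ≤ r)
    (hℓ₁ : r ^ 2 - 2 < ℓ) (hℓ₂ : ℓ < (r + 1) ^ 2 - 2) (heven : Even (ℓ - r)) :
    (∀ j ≤ ℓ + 2, ((X - 1) ^ 2 * (X + 1) ^ ℓ : Polynomial ℤ).coeff j ≠ 0) ∧
    (∀ j, j ≤ (ℓ - r) / 2 →
      0 < ((X - 1) ^ 2 * (X + 1) ^ ℓ : Polynomial ℤ).coeff j) ∧
    (∀ j, (ℓ + r + 4) / 2 ≤ j → j ≤ ℓ + 2 →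
      0 < ((X - 1) ^ 2 * (X + 1) ^ ℓ : Polynomial ℤ).coeff j) ∧
    (∀ j, (ℓ - r) / 2 < j → j < (ℓ + r + 4) / 2 →
      ((X - 1) ^ 2 * (X + 1) ^ ℓ : Polynomial ℤ).coeff j < 0) :=
  coeff_signs_even_case_general r ℓ hℓ₁ hℓ₂ heven
end

section
/- Let r ≥ 2 be an integer, let ℓ = r²−2, and let c_j denote the coefficient of x^j in the polynomial (x−1)²(x+1)^ℓ (a polynomial of degree r²). Then c_j = 0 exactly for j ∈ {r(r−1)/2, r(r+1)/2}; c_j < 0 for r(r−1)/2 < j < r(r+1)/2; and c_j > 0 for j < r(r−1)/2 and for j > r(r+1)/2. In particular the sequence of coefficients, read from the leading one, consists of r(r−1)/2 positive entries, a zero, r−1 negative entries, a zero, and r(r−1)/2 positive entries. -/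
/-! With `n = ℓ + 2`, comparing consecutive binomial coefficients gives
`n (n - 1) c_j = ((n - 2j)² - n) C(n, j)` for every `j`, so for `j ≤ n` the coefficient `c_j`
has the sign of `(n - 2j)² - n`. When `n = r²` this quadratic in `j` factors as
`4 (r(r-1)/2 - j) (r(r+1)/2 - j)`, which gives all the signs at once. -/

open Polynomial

theorem natCast_choose_succ_right_mul_eq (n k : ℕ) :
    (n.choose (k + 1) : ℤ) * (k + 1) = n.choose k * ((n : ℤ) - k) := by
  rcases le_or_gt k n with h | h
  · have := congrArg (Nat.cast : ℕ → ℤ) (Nat.choose_succ_right_eq n k)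
    push_cast [Nat.cast_sub h] at this
    exact this
  · simp [Nat.choose_eq_zero_of_lt h, Nat.choose_eq_zero_of_lt (Nat.lt_succ_of_lt h)]

theorem mul_coeff_X_sub_one_sq_mul_X_add_one_pow (ℓ j : ℕ) :
    ((ℓ : ℤ) + 2) * (ℓ + 1) * ((X - 1) ^ 2 * (X + 1) ^ ℓ : ℤ[X]).coeff j =
      (((ℓ : ℤ) + 2 - 2 * j) ^ 2 - (ℓ + 2)) * (ℓ + 2).choose j := by
  rw [show ((X - 1) ^ 2 * (X + 1) ^ ℓ : ℤ[X]) =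
    X ^ 2 * (X + 1) ^ ℓ - 2 * (X ^ 1 * (X + 1) ^ ℓ) + (X + 1) ^ ℓ by ring]
  simp only [coeff_add, coeff_sub, coeff_ofNat_mul, coeff_X_pow_mul', coeff_X_add_one_pow]
  match j with
  | 0 => norm_num; ring
  | 1 => norm_num; ring
  | k + 2 =>
    have hB := natCast_choose_succ_right_mul_eq ℓ k
    have hC := natCast_choose_succ_right_mul_eq ℓ (k + 1)
    have hsum : ((ℓ + 2).choose (k + 2) : ℤ) =
        ℓ.choose k + 2 * ℓ.choose (k + 1) + ℓ.choose (k + 2) := by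
      simp only [Nat.choose_succ_succ']; push_cast; ring
    simp only [le_add_iff_nonneg_left, zero_le, if_true, Nat.add_sub_cancel, hsum]
    push_cast at hC ⊢
    -- after multiplying by `(k + 1)(k + 2)`, `hB` and `hC` express everything through `C(ℓ, k)`
    set N : ℤ := ((ℓ : ℤ) + 2) * (ℓ + 1)
    set Q : ℤ := ((ℓ : ℤ) + 2 - 2 * ((k : ℤ) + 2)) ^ 2 - (ℓ + 2)
    refine mul_left_cancel₀ (by positivity : ((k : ℤ) + 1) * (k + 2) ≠ 0) ?_
    linear_combination
      (-2 * (N + Q) * (k + 2) + (N - Q) * (ℓ - k - 1)) * hB + (N - Q) * (k + 1) * hC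

theorem sign_coeff_X_sub_one_sq_mul_X_add_one_pow {ℓ j : ℕ} (hj : j ≤ ℓ + 2) :
    SignType.sign (((X - 1) ^ 2 * (X + 1) ^ ℓ : ℤ[X]).coeff j) =
      SignType.sign (((ℓ : ℤ) + 2 - 2 * j) ^ 2 - (ℓ + 2)) := by
  have h := congrArg SignType.sign (mul_coeff_X_sub_one_sq_mul_X_add_one_pow ℓ j)
  rwa [sign_mul (_ * _), sign_mul _ (Nat.cast _),
    sign_pos (by positivity : (0 : ℤ) < (ℓ + 2) * (ℓ + 1)),
    sign_pos (by exact_mod_cast Nat.choose_pos hj : (0 : ℤ) < (ℓ + 2).choose j), one_mul,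
    mul_one] at h

theorem sign_coeff_X_sub_one_sq_mul_X_add_one_pow_sq_sub_two {r j : ℕ} (hr : 2 ≤ r)
    (hj : j ≤ r ^ 2) :
    SignType.sign (((X - 1) ^ 2 * (X + 1) ^ (r ^ 2 - 2) : ℤ[X]).coeff j) =
      SignType.sign
        ((((r * (r - 1) / 2 : ℕ) : ℤ) - j) * (((r * (r + 1) / 2 : ℕ) : ℤ) - j)) := by
  have hr2 : 2 ≤ r ^ 2 := by nlinarith
  have ha : ((r * (r - 1) / 2 : ℕ) : ℤ) * 2 = r ^ 2 - r := by
    have h := Nat.div_mul_cancel (Nat.even_mul_pred_self r).two_dvd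
    simp only [← Nat.cast_inj (R := ℤ), Nat.cast_mul, Nat.cast_ofNat,
      Nat.cast_pred (by omega : 0 < r)] at h
    linear_combination h
  have hb : ((r * (r + 1) / 2 : ℕ) : ℤ) * 2 = r ^ 2 + r := by
    have h := Nat.div_mul_cancel (Nat.even_mul_succ_self r).two_dvd
    simp only [← Nat.cast_inj (R := ℤ), Nat.cast_mul, Nat.cast_ofNat, Nat.cast_succ] at h
    linear_combination h
  generalize r * (r - 1) / 2 = a at ha ⊢
  generalize r * (r + 1) / 2 = b at hb ⊢
  have hQ : (((r ^ 2 - 2 : ℕ) : ℤ) + 2 - 2 * j) ^ 2 - ((r ^ 2 - 2 : ℕ) + 2) =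
      4 * (((a : ℤ) - j) * ((b : ℤ) - j)) := by
    push_cast [Nat.cast_sub hr2]
    linear_combination (2 * j - 2 * (b : ℤ)) * ha + (2 * j + r - r ^ 2) * hb
  rw [sign_coeff_X_sub_one_sq_mul_X_add_one_pow (by omega), hQ, sign_mul, sign_pos four_pos,
    one_mul]

/-- part (3) of Lemma 1: for `r ≥ 2` and `ℓ = r² - 2`, the coefficient
of `x^j` in `(x-1)²(x+1)^ℓ` (a polynomial of degree `r²`) vanishes exactly for
`j = r(r-1)/2` and `j = r(r+1)/2`, is negative strictly between these two values of
`j`, and is positive for `j < r(r-1)/2` and for `j > r(r+1)/2`.  In particular, read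
from the leading coefficient, the signs form `r(r-1)/2` positive entries, a zero,
`r-1` negative entries, a zero, and `r(r-1)/2` positive entries. -/
theorem coeff_signs_square_case (r : ℕ) (hr : 2 ≤ r) :
    ∀ j ≤ r ^ 2,
      (((X - 1) ^ 2 * (X + 1) ^ (r ^ 2 - 2) : Polynomial ℤ).coeff j = 0 ↔
        j = r * (r - 1) / 2 ∨ j = r * (r + 1) / 2) ∧
      (r * (r - 1) / 2 < j → j < r * (r + 1) / 2 →
        ((X - 1) ^ 2 * (X + 1) ^ (r ^ 2 - 2) : Polynomial ℤ).coeff j < 0) ∧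
      (j < r * (r - 1) / 2 →
        0 < ((X - 1) ^ 2 * (X + 1) ^ (r ^ 2 - 2) : Polynomial ℤ).coeff j) ∧
      (r * (r + 1) / 2 < j →
        0 < ((X - 1) ^ 2 * (X + 1) ^ (r ^ 2 - 2) : Polynomial ℤ).coeff j) := by
  intro j hj
  have hab : r * (r - 1) / 2 < r * (r + 1) / 2 :=
    Nat.div_lt_div_of_lt_of_dvd (Nat.even_mul_succ_self r).two_dvd
      (Nat.mul_lt_mul_of_pos_left (by omega) (by omega))
  have hsign := sign_coeff_X_sub_one_sq_mul_X_add_one_pow_sq_sub_two hr hj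
  generalize r * (r - 1) / 2 = a at hab hsign ⊢
  generalize r * (r + 1) / 2 = b at hab hsign ⊢
  generalize ((X - 1) ^ 2 * (X + 1) ^ (r ^ 2 - 2) : ℤ[X]).coeff j = c at hsign ⊢
  refine ⟨?_, fun haj hjb => ?_, fun hja => ?_, fun hbj => ?_⟩
  · rw [← sign_eq_zero_iff, hsign, sign_eq_zero_iff, mul_eq_zero, sub_eq_zero, sub_eq_zero]
    omega
  · rw [← sign_eq_neg_one_iff, hsign, sign_eq_neg_one_iff]
    exact mul_neg_of_neg_of_pos (by omega) (by omega)
  · rw [← sign_eq_one_iff, hsign, sign_eq_one_iff]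
    exact mul_pos (by omega) (by omega)
  · rw [← sign_eq_one_iff, hsign, sign_eq_one_iff]
    exact mul_pos_of_neg_of_neg (by omega) (by omega)
end

section
/- Let ℓ ≥ 2 be an integer and let c_j denote the coefficient of x^j in (x−1)²(x+1)^ℓ. Then for 0 ≤ j ≤ ℓ+2, c_j = 0 if and only if 4j² − 4(ℓ+2)j + (ℓ+1)(ℓ+2) = 0, i.e. if and only if j = (ℓ+2 ± √(ℓ+2))/2. Consequently, the polynomial (x−1)²(x+1)^ℓ has a vanishing coefficient if and only if ℓ+2 is a perfect square. -/
/-!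
Since `(X - 1)² = (X + 1)² - 4X`, the coefficient is `c_j = C(ℓ+2, j) - 4 C(ℓ, j-1)`, and
multiplying by `j! k!` with `j + k = ℓ + 2` gives `ℓ! ((ℓ+1)(ℓ+2) - 4jk)`, which is `ℓ!` times the
quadratic. Completing the square, the quadratic is `(2j - (ℓ+2))² - (ℓ+2)`, so it has an integral
root exactly when `ℓ + 2` is a perfect square.
-/

open Polynomial Nat

theorem Nat.choose_mul_succ_factorial_mul_factorial {ℓ i k : ℕ} (h : i + k = ℓ + 1) :
    ℓ.choose i * ((i + 1)! * k !) = ℓ ! * ((i + 1) * k) := by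
  rcases k with _ | b
  · simp [Nat.choose_eq_zero_of_lt (show ℓ < i by omega)]
  · obtain rfl : ℓ = b + i := by omega
    have hbinom := Nat.add_choose_mul_factorial_mul_factorial b i
    rw [Nat.factorial_succ, Nat.factorial_succ, ← hbinom]
    ring

section

variable {R : Type*} [CommRing R]

theorem Polynomial.coeff_X_mul_X_add_one_pow_mul_factorial {ℓ j k : ℕ} (h : j + k = ℓ + 2) :
    (X * (X + 1) ^ ℓ : R[X]).coeff j * ((j ! * k ! : ℕ) : R) = ((ℓ ! * (j * k) : ℕ) : R) := by
  rcases j with _ | i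
  · simp
  · rw [coeff_X_mul, coeff_X_add_one_pow, ← Nat.cast_mul,
      Nat.choose_mul_succ_factorial_mul_factorial (by omega)]

theorem Polynomial.coeff_X_sub_one_sq_mul_X_add_one_pow_mul_factorial {ℓ j k : ℕ}
    (h : j + k = ℓ + 2) :
    ((X - 1) ^ 2 * (X + 1) ^ ℓ : R[X]).coeff j * ((j ! * k ! : ℕ) : R)
      = ((ℓ ! : ℕ) : R) * ((ℓ + 1) * (ℓ + 2) - 4 * (j * k)) := by
  have hsplit : ((X - 1) ^ 2 * (X + 1) ^ ℓ : R[X])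
      = (X + 1) ^ (ℓ + 2) - 4 * (X * (X + 1) ^ ℓ) := by ring
  have hfull : ((ℓ + 2).choose j * (j ! * k !) : ℕ) = ℓ ! * ((ℓ + 1) * (ℓ + 2)) := by
    have hbinom := Nat.add_choose_mul_factorial_mul_factorial k j
    rw [show k + j = ℓ + 2 by omega] at hbinom
    calc _ = (ℓ + 2)! := by rw [← hbinom]; ring
      _ = _ := by rw [Nat.factorial_succ, Nat.factorial_succ]; ring
  rw [hsplit, coeff_sub, coeff_ofNat_mul, sub_mul, mul_assoc,
    coeff_X_mul_X_add_one_pow_mul_factorial h, coeff_X_add_one_pow, ← Nat.cast_mul, hfull]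
  push_cast
  ring

theorem Polynomial.coeff_X_sub_one_sq_mul_X_add_one_pow_eq_zero_iff [IsDomain R] [CharZero R]
    {ℓ j : ℕ} (hj : j ≤ ℓ + 2) :
    ((X - 1) ^ 2 * (X + 1) ^ ℓ : R[X]).coeff j = 0 ↔
      4 * (j : R) ^ 2 - 4 * ((ℓ : R) + 2) * j + ((ℓ : R) + 1) * ((ℓ : R) + 2) = 0 := by
  obtain ⟨k, hk⟩ : ∃ k, j + k = ℓ + 2 := ⟨ℓ + 2 - j, by omega⟩
  have hkR : (ℓ : R) + 2 = j + k := by exact_mod_cast hk.symm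
  have hq : 4 * (j : R) ^ 2 - 4 * ((ℓ : R) + 2) * j + ((ℓ : R) + 1) * ((ℓ : R) + 2)
      = ((ℓ : R) + 1) * ((ℓ : R) + 2) - 4 * (j * k) := by rw [hkR]; ring
  have hscaled := coeff_X_sub_one_sq_mul_X_add_one_pow_mul_factorial (R := R) hk
  have hfact : ((j ! * k ! : ℕ) : R) ≠ 0 := Nat.cast_ne_zero.mpr (by positivity)
  rw [hq, ← mul_left_inj' hfact, hscaled, zero_mul, _root_.mul_eq_zero,
    or_iff_right (Nat.cast_ne_zero.mpr ℓ.factorial_ne_zero)]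

theorem quadratic_eq_zero_iff_two_mul_sub_sq_eq (L x : R) :
    4 * x ^ 2 - 4 * (L + 2) * x + (L + 1) * (L + 2) = 0 ↔ (2 * x - (L + 2)) ^ 2 = L + 2 := by
  constructor <;> intro h <;> linear_combination h

end

theorem two_mul_sub_sq_eq_iff {n x : ℝ} (hn : 0 ≤ n) :
    (2 * x - n) ^ 2 = n ↔ x = (n + √n) / 2 ∨ x = (n - √n) / 2 := by
  calc (2 * x - n) ^ 2 = n ↔ (2 * x - n) ^ 2 = √n ^ 2 := by rw [Real.sq_sqrt hn]
    _ ↔ 2 * x - n = √n ∨ 2 * x - n = -√n := sq_eq_sq_iff_eq_or_eq_neg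
    _ ↔ _ := by
      constructor <;> rintro (h | h) <;> [left; right; left; right] <;> linarith

theorem exists_two_mul_sub_sq_eq_iff (n : ℕ) :
    (∃ j ≤ n, (2 * (j : ℤ) - n) ^ 2 = n) ↔ ∃ k : ℕ, n = k ^ 2 := by
  constructor
  · rintro ⟨j, -, hj⟩
    exact ⟨(2 * (j : ℤ) - n).natAbs, by rw [← Int.natCast_inj]; push_cast; rw [sq_abs, hj]⟩
  · rintro ⟨k, rfl⟩
    obtain ⟨j, hj⟩ : Even (k * (k + 1)) := Nat.even_mul_succ_self k
    refine ⟨j, by nlinarith, ?_⟩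
    have hjZ : (k : ℤ) * (k + 1) = j + j := by exact_mod_cast hj
    push_cast
    linear_combination ((k : ℤ) ^ 2 - k - 2 * j) * hjZ

theorem coeff_vanishing_iff_general (ℓ : ℕ) :
    (∀ j ≤ ℓ + 2,
      (((X - 1) ^ 2 * (X + 1) ^ ℓ : Polynomial ℤ).coeff j = 0 ↔
        4 * (j : ℤ) ^ 2 - 4 * ((ℓ : ℤ) + 2) * (j : ℤ) + ((ℓ : ℤ) + 1) * ((ℓ : ℤ) + 2) = 0) ∧
      (((X - 1) ^ 2 * (X + 1) ^ ℓ : Polynomial ℤ).coeff j = 0 ↔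
        ((j : ℝ) = (((ℓ : ℝ) + 2) + Real.sqrt ((ℓ : ℝ) + 2)) / 2 ∨
         (j : ℝ) = (((ℓ : ℝ) + 2) - Real.sqrt ((ℓ : ℝ) + 2)) / 2))) ∧
    ((∃ j ≤ ℓ + 2, ((X - 1) ^ 2 * (X + 1) ^ ℓ : Polynomial ℤ).coeff j = 0) ↔
      ∃ k : ℕ, ℓ + 2 = k ^ 2) := by
  have hcoeff (j : ℕ) (hj : j ≤ ℓ + 2) :=
    coeff_X_sub_one_sq_mul_X_add_one_pow_eq_zero_iff (R := ℤ) hj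
  refine ⟨fun j hj => ⟨hcoeff j hj, ?_⟩, ?_⟩
  · rw [hcoeff j hj, quadratic_eq_zero_iff_two_mul_sub_sq_eq,
      ← two_mul_sub_sq_eq_iff (by positivity)]
    norm_cast
  · rw [← exists_two_mul_sub_sq_eq_iff]
    refine exists_congr fun j => and_congr_right fun hj => ?_
    rw [hcoeff j hj, quadratic_eq_zero_iff_two_mul_sub_sq_eq]
    push_cast
    rfl

/-- for `ℓ ≥ 2` and `0 ≤ j ≤ ℓ + 2`, the coefficient of `x^j` in
`(x-1)²(x+1)^ℓ` vanishes if and only if `4j² - 4(ℓ+2)j + (ℓ+1)(ℓ+2) = 0`, i.e. if and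
only if `j = (ℓ + 2 ± √(ℓ+2))/2`.  Consequently `(x-1)²(x+1)^ℓ` has a vanishing
coefficient if and only if `ℓ + 2` is a perfect square. -/
theorem coeff_vanishing_iff (ℓ : ℕ) (hℓ : 2 ≤ ℓ) :
    (∀ j ≤ ℓ + 2,
      (((X - 1) ^ 2 * (X + 1) ^ ℓ : Polynomial ℤ).coeff j = 0 ↔
        4 * (j : ℤ) ^ 2 - 4 * ((ℓ : ℤ) + 2) * (j : ℤ) + ((ℓ : ℤ) + 1) * ((ℓ : ℤ) + 2) = 0) ∧
      (((X - 1) ^ 2 * (X + 1) ^ ℓ : Polynomial ℤ).coeff j = 0 ↔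
        ((j : ℝ) = (((ℓ : ℝ) + 2) + Real.sqrt ((ℓ : ℝ) + 2)) / 2 ∨
         (j : ℝ) = (((ℓ : ℝ) + 2) - Real.sqrt ((ℓ : ℝ) + 2)) / 2))) ∧
    ((∃ j ≤ ℓ + 2, ((X - 1) ^ 2 * (X + 1) ^ ℓ : Polynomial ℤ).coeff j = 0) ↔
      ∃ k : ℕ, ℓ + 2 = k ^ 2) :=
  coeff_vanishing_iff_general ℓ
end

section
/- Let P be a real polynomial of degree d ≥ 1 all of whose roots are real and simple. Then for every t ∈ [0,1], the polynomial tP + (1−t)P′ has all roots real and simple (for t ∈ (0,1] it has degree d, and for t = 0 it is P′ of degree d−1). -/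
open Polynomial

/-!
For `0 < t < 1`, up to the factor `1 - t` the polynomial `tP + (1 - t)P'` is `λP + P'` with
`λ = t / (1 - t) > 0`, and `e^{λx} (λP + P')(x)` is the derivative of `e^{λx} P(x)`. This function
vanishes at the `d` roots of `P` and tends to `0` at `-∞`, so Rolle's theorem, applied between
consecutive roots and on the half-line left of the smallest one, gives `d` distinct real roots of a
polynomial of degree `d`. For `t = 0` Rolle's theorem between consecutive roots gives `d - 1`
distinct roots of `P'`.
-/

open Filter Set Topology

theorem exists_lt_isLocalMax_of_tendsto_atBot {f : ℝ → ℝ} {b y : ℝ}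
    (hf : ContinuousOn f (Iic b)) (hlim : Tendsto f atBot (𝓝 (f b))) (hyb : y < b)
    (hfy : f b < f y) : ∃ c < b, IsLocalMax f c := by
  have hfar : ∀ᶠ x in cocompact ℝ ⊓ 𝓟 (Iic b), f x ≤ f y := by
    rw [cocompact_eq_atBot_atTop, eventually_inf_principal, eventually_sup]
    exact ⟨(hlim.eventually (gt_mem_nhds hfy)).mono fun x hx _ => hx.le,
      (eventually_gt_atTop b).mono fun x hx hxb => absurd hxb (not_le.2 hx)⟩
  obtain ⟨c, hcmem, hmax⟩ := hf.exists_isMaxOn' isClosed_Iic hyb.le hfar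
  have hcb : c < b := hcmem.lt_of_ne <| by
    rintro rfl
    exact (hmax hyb.le).not_gt hfy
  exact ⟨c, hcb, hmax.isLocalMax (Iic_mem_nhds hcb)⟩

theorem exists_lt_isLocalExtr_of_tendsto_atBot {f : ℝ → ℝ} {b : ℝ}
    (hf : ContinuousOn f (Iic b)) (hlim : Tendsto f atBot (𝓝 (f b))) :
    ∃ c < b, IsLocalExtr f c := by
  by_cases! hconst : ∀ y < b, f y = f b
  · refine ⟨b - 1, by linarith, .inl ?_⟩
    filter_upwards [Iio_mem_nhds (sub_one_lt b)] with x hx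
    rw [hconst x hx, hconst _ (sub_one_lt b)]
  obtain ⟨y, hyb, hy⟩ := hconst
  rcases hy.lt_or_gt with hlt | hgt
  · obtain ⟨c, hcb, hc⟩ := exists_lt_isLocalMax_of_tendsto_atBot (f := fun x => -f x)
      hf.neg hlim.neg hyb (neg_lt_neg hlt)
    exact ⟨c, hcb, .inl (by simpa using hc.neg : IsLocalMin f c)⟩
  · obtain ⟨c, hcb, hc⟩ := exists_lt_isLocalMax_of_tendsto_atBot hf hlim hyb hgt
    exact ⟨c, hcb, .inr hc⟩

theorem exists_lt_hasDerivAt_eq_zero_of_tendsto_atBot {f f' : ℝ → ℝ} {b : ℝ}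
    (hff' : ∀ x ≤ b, HasDerivAt f (f' x) x) (hlim : Tendsto f atBot (𝓝 (f b))) :
    ∃ c < b, f' c = 0 := by
  obtain ⟨c, hcb, hc⟩ := exists_lt_isLocalExtr_of_tendsto_atBot
    (fun x hx => (hff' x hx).continuousAt.continuousWithinAt) hlim
  exact ⟨c, hcb, hc.hasDerivAt_eq_zero (hff' c hcb.le)⟩

theorem card_zeros_le_card_zeros_deriv_of_tendsto_atBot {f f' : ℝ → ℝ}
    (hff' : ∀ x, HasDerivAt f (f' x) x) (hlim : Tendsto f atBot (𝓝 0)) {s t : Finset ℝ}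
    (hs : ∀ x ∈ s, f x = 0) (ht : ∀ x, f' x = 0 → x ∈ t) : s.card ≤ t.card := by
  rcases s.eq_empty_or_nonempty with rfl | hne
  · exact Nat.zero_le _
  obtain ⟨c, hcm, hc⟩ := exists_lt_hasDerivAt_eq_zero_of_tendsto_atBot (b := s.min' hne)
    (fun x _ => hff' x) (by rwa [hs _ (s.min'_mem hne)])
  have hlt : ∀ x ∈ s, c - 1 < x := fun x hx => by linarith [s.min'_le x hx]
  have hge : ∀ x ∈ insert (c - 1) s, c - 1 ≤ x :=
    Finset.forall_mem_insert _ _ _ |>.2 ⟨le_rfl, fun x hx => (hlt x hx).le⟩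
  suffices (insert (c - 1) s).card ≤ t.card + 1 by
    rwa [Finset.card_insert_of_notMem fun h => (hlt _ h).false, Nat.add_le_add_iff_right] at this
  -- adjoining `c - 1` lets the zero `c` left of `s` count as an interleaving point
  refine Finset.card_le_of_interleaved fun x hx y hy hxy _ => ?_
  have hy : y ∈ s := (Finset.mem_insert.1 hy).resolve_left ((hge x hx).trans_lt hxy).ne'
  rcases Finset.mem_insert.1 hx with rfl | hx
  · exact ⟨c, ht c hc, sub_one_lt c, hcm.trans_le (s.min'_le y hy)⟩
  · obtain ⟨z, hz, hz0⟩ := exists_hasDerivAt_eq_zero hxy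
      (HasDerivAt.continuousOn fun x _ => hff' x) ((hs x hx).trans (hs y hy).symm)
      fun x _ => hff' x
    exact ⟨z, ht z hz0, hz⟩

namespace Polynomial

theorem tendsto_exp_mul_mul_eval_atBot {l : ℝ} (hl : 0 < l) (p : ℝ[X]) :
    Tendsto (fun x => Real.exp (l * x) * p.eval x) atBot (𝓝 0) := by
  have hdeg : p.degree ≤ ((-X : ℝ[X]) ^ p.natDegree).degree := by
    rw [degree_pow, degree_neg, degree_X, nsmul_one]
    exact degree_le_natDegree
  have ho : p.eval =o[atBot] fun x => Real.exp (l * -x) := by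
    refine (isBigO_atBot_of_degree_le _ _ hdeg).trans_isLittleO ?_
    simp only [eval_pow, eval_neg, eval_X]
    exact (isLittleO_pow_exp_pos_mul_atTop p.natDegree hl).comp_tendsto tendsto_neg_atBot_atTop
  refine ho.tendsto_div_nhds_zero.congr fun x => ?_
  rw [mul_neg, Real.exp_neg, div_inv_eq_mul, mul_comm]

theorem hasDerivAt_exp_mul_mul_eval (l : ℝ) (p : ℝ[X]) (x : ℝ) :
    HasDerivAt (fun y => Real.exp (l * y) * p.eval y)
      (Real.exp (l * x) * (l * p.eval x + p.derivative.eval x)) x :=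
  (((hasDerivAt_id x).const_mul l).exp.mul (p.hasDerivAt x)).congr_deriv (by simp only [id_eq, mul_one]; ring)

section Domain

variable {R : Type*} [CommRing R] [IsDomain R]

theorem card_roots_eq_natDegree_and_nodup_of_natDegree_le [DecidableEq R] {p : R[X]}
    (h : p.natDegree ≤ p.roots.toFinset.card) :
    p.roots.card = p.natDegree ∧ p.roots.Nodup := by
  have hcard : p.roots.toFinset.card = p.roots.card :=
    le_antisymm (Multiset.toFinset_card_le _) (p.card_roots'.trans h)
  exact ⟨le_antisymm p.card_roots' (hcard ▸ h), Multiset.toFinset_card_eq_card_iff_nodup.1 hcard⟩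

theorem degree_C_mul_add_C_mul_derivative {a : R} (ha : a ≠ 0) (b : R) (p : R[X]) :
    (C a * p + C b * derivative p).degree = p.degree := by
  rcases eq_or_ne p 0 with rfl | hp
  · simp
  rw [degree_add_eq_left_of_degree_lt, degree_C_mul ha]
  rw [degree_C_mul ha, C_mul']
  exact (degree_smul_le b _).trans_lt (degree_derivative_lt hp)

end Domain

theorem card_roots_toFinset_le_C_mul_add_C_mul_derivative {a b : ℝ} (ha : 0 < a) (hb : 0 ≤ b)
    (p : ℝ[X]) :
    p.roots.toFinset.card ≤ (C a * p + C b * derivative p).roots.toFinset.card := by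
  rcases hb.eq_or_lt with rfl | hb
  · simp [roots_C_mul _ ha.ne']
  rcases eq_or_ne p 0 with rfl | hp
  · simp
  have hq : C a * p + C b * derivative p ≠ 0 := by
    rw [← degree_ne_bot, degree_C_mul_add_C_mul_derivative ha.ne', degree_ne_bot]
    exact hp
  refine card_zeros_le_card_zeros_deriv_of_tendsto_atBot (hasDerivAt_exp_mul_mul_eval (a / b) p)
    (tendsto_exp_mul_mul_eval_atBot (div_pos ha hb) p) (fun x hx => ?_) fun x hx => ?_
  · rw [(mem_roots hp).1 (Multiset.mem_toFinset.1 hx), mul_zero]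
  · rw [Multiset.mem_toFinset, mem_roots hq, IsRoot, eval_add, eval_mul, eval_mul, eval_C, eval_C]
    have hx : a / b * p.eval x + (derivative p).eval x = 0 :=
      (mul_eq_zero.1 hx).resolve_left (Real.exp_ne_zero _)
    field_simp at hx
    linear_combination hx

end Polynomial

theorem segment_to_derivative_hyperbolic_general (d : ℕ) (P : Polynomial ℝ)
    (hdeg : P.natDegree = d) (hcard : P.roots.card = d) (hnodup : P.roots.Nodup) :
    ∀ t : ℝ, 0 ≤ t → t ≤ 1 →
      (C t * P + C (1 - t) * P.derivative).roots.card =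
        (C t * P + C (1 - t) * P.derivative).natDegree ∧
      (C t * P + C (1 - t) * P.derivative).roots.Nodup ∧
      (0 < t → (C t * P + C (1 - t) * P.derivative).natDegree = d) ∧
      (t = 0 → (C t * P + C (1 - t) * P.derivative).natDegree = d - 1) := by
  intro t ht0 ht1
  have hroots : P.roots.toFinset.card = d := by rw [Multiset.toFinset_card_of_nodup hnodup, hcard]
  rcases ht0.eq_or_lt with rfl | htpos
  · have hdeg' : P.derivative.natDegree = d - 1 := by rw [natDegree_derivative, hdeg]
    rw [C_0, zero_mul, zero_add, sub_zero, C_1, one_mul, hdeg']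
    obtain ⟨hcard', hnodup'⟩ :=
      card_roots_eq_natDegree_and_nodup_of_natDegree_le (p := P.derivative) <| by
        have := P.card_roots_toFinset_le_derivative
        omega
    exact ⟨hcard'.trans hdeg', hnodup', fun h => absurd h (lt_irrefl 0), fun _ => rfl⟩
  · have hdeg' : (C t * P + C (1 - t) * P.derivative).natDegree = d := by
      rw [natDegree_eq_of_degree_eq (degree_C_mul_add_C_mul_derivative htpos.ne' _ P), hdeg]
    obtain ⟨hcard', hnodup'⟩ := card_roots_eq_natDegree_and_nodup_of_natDegree_le <| hdeg' ▸
      hroots ▸ card_roots_toFinset_le_C_mul_add_C_mul_derivative htpos (sub_nonneg.2 ht1) P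
    exact ⟨hcard', hnodup', fun _ => hdeg', fun h => absurd h htpos.ne'⟩

/-- if `P` is a real polynomial of degree `d ≥ 1` all of whose roots are
real and simple (it has `d` pairwise distinct real roots counted with multiplicity),
then for every `t ∈ [0,1]` the polynomial `tP + (1-t)P'` has all roots real and
simple; for `t ∈ (0,1]` it has degree `d` and for `t = 0` it is `P'`, of degree
`d - 1`. -/
theorem segment_to_derivative_hyperbolic (d : ℕ) (hd : 1 ≤ d) (P : Polynomial ℝ)
    (hdeg : P.natDegree = d) (hcard : P.roots.card = d) (hnodup : P.roots.Nodup) :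
    ∀ t : ℝ, 0 ≤ t → t ≤ 1 →
      (C t * P + C (1 - t) * P.derivative).roots.card =
        (C t * P + C (1 - t) * P.derivative).natDegree ∧
      (C t * P + C (1 - t) * P.derivative).roots.Nodup ∧
      (0 < t → (C t * P + C (1 - t) * P.derivative).natDegree = d) ∧
      (t = 0 → (C t * P + C (1 - t) * P.derivative).natDegree = d - 1) :=
  segment_to_derivative_hyperbolic_general d P hdeg hcard hnodup
end
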